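/- arXiv:2209.01494 — 3 statements merged into one kernel-verified Lean document; each statement's English description precedes it below -/
import Mathlib

section
/- Let C be a commutative ring and let a be an n×n matrix over a commutative ring containing C. If a satisfies a monic polynomial with coefficients in C, then every coefficient of the characteristic polynomial of a is integral over C. -/
open Polynomial

/-- A root of a monic polynomial whose coefficients are integral over `C` is
itself integral over `C`. -/
lemma aux_root_integral {C L : Type*} [CommRing C] [CommRing L] [Algebra C L]
    {p : L[X]} (hp : p.Monic) (hc : ∀ i, IsIntegral C (p.coeff i)) {x : L}
    (hx : p.eval x = 0) : IsIntegral C x := by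
  cases subsingleton_or_nontrivial L with
  | inl h =>
    have hx0 : x = 0 := Subsingleton.elim _ _
    rw [hx0]
    exact isIntegral_zero
  | inr h =>
    have hmem : p ∈ Polynomial.lifts (algebraMap (integralClosure C L) L) := by
      rw [Polynomial.lifts_iff_coeff_lifts]
      intro i
      exact ⟨⟨p.coeff i, hc i⟩, rfl⟩
    obtain ⟨q, hq, -, hqm⟩ := Polynomial.lifts_and_degree_eq_and_monic hmem hp
    haveI : Algebra.IsIntegral C (integralClosure C L) :=
      ⟨fun y => integralClosure.isIntegral y⟩
    have hint : IsIntegral (integralClosure C L) x := by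
      refine ⟨q, hqm, ?_⟩
      rw [Polynomial.eval₂_eq_eval_map, hq, hx]
    exact isIntegral_trans x hint

/-- Kronecker: a monic factor of a monic polynomial with coefficients integral
over `C` has coefficients integral over `C`. -/
lemma aux_kron {C : Type*} [CommRing C] :
    ∀ (d : ℕ) {K : Type*} [CommRing K] [Algebra C K] (f g : K[X]),
      f.natDegree ≤ d → f.Monic → g.Monic →
      (∀ i, IsIntegral C ((f * g).coeff i)) → ∀ i, IsIntegral C (f.coeff i) := by
  intro d
  induction d with
  | zero =>
    intro K _ _ f g hdeg hf _ _ i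
    have hf1 : f = 1 := (hf.natDegree_eq_zero).mp (Nat.le_zero.mp hdeg)
    subst hf1
    rcases i with _ | i
    · rw [Polynomial.coeff_one_zero]; exact isIntegral_one
    · have : (1 : K[X]).coeff (i + 1) = 0 := by simp [Polynomial.coeff_one]
      rw [this]; exact isIntegral_zero
  | succ d ih =>
    intro K _ _ f g hdeg hf hg h i
    by_cases hd0 : f.natDegree = 0
    · have hf1 : f = 1 := (hf.natDegree_eq_zero).mp hd0
      subst hf1
      rcases i with _ | i
      · rw [Polynomial.coeff_one_zero]; exact isIntegral_one
      · have : (1 : K[X]).coeff (i + 1) = 0 := by simp [Polynomial.coeff_one]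
        rw [this]; exact isIntegral_zero
    · haveI hKnt : Nontrivial K := by
        rcases subsingleton_or_nontrivial K with hs | hn
        · exact absurd (Subsingleton.elim f 1 ▸ Polynomial.natDegree_one) hd0
        · exact hn
      set L := AdjoinRoot f with hL
      haveI : IsScalarTower C K L :=
        IsScalarTower.of_algebraMap_eq' rfl
      have hinj : Function.Injective (algebraMap K L) := by
        rw [injective_iff_map_eq_zero]
        intro x hx0
        rw [AdjoinRoot.algebraMap_eq, AdjoinRoot.of, RingHom.comp_apply,
          AdjoinRoot.mk_eq_zero] at hx0
        by_contra hxne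
        refine hf.not_dvd_of_degree_lt (by simpa using hxne) ?_ hx0
        rw [Polynomial.degree_C hxne]
        exact Polynomial.natDegree_pos_iff_degree_pos.mp (Nat.pos_of_ne_zero hd0)
      haveI : Nontrivial L := hinj.nontrivial
      set r : L := AdjoinRoot.root f with hr
      have hfL : (f.map (algebraMap K L)).eval r = 0 := by
        rw [AdjoinRoot.algebraMap_eq]
        exact AdjoinRoot.isRoot_root f
      -- r is integral over C
      have hrint : IsIntegral C r := by
        refine aux_root_integral ((hf.mul hg).map (algebraMap K L)) (fun j => ?_)
          (p := (f * g).map (algebraMap K L)) ?_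
        · rw [Polynomial.coeff_map]
          exact (h j).map (IsScalarTower.toAlgHom C K L)
        · rw [Polynomial.map_mul, Polynomial.eval_mul, hfL, zero_mul]
      have hfac : (X - Polynomial.C r) * ((f.map (algebraMap K L)) /ₘ (X - Polynomial.C r))
          = f.map (algebraMap K L) :=
        (Polynomial.mul_divByMonic_eq_iff_isRoot).mpr hfL
      set f₁ := (f.map (algebraMap K L)) /ₘ (X - Polynomial.C r) with hf₁
      have hfLmonic : (f.map (algebraMap K L)).Monic := hf.map _
      have hf₁monic : f₁.Monic :=
        (Polynomial.monic_X_sub_C r).of_mul_monic_left (by rw [hfac]; exact hfLmonic)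
      have hg' : ((X - Polynomial.C r) * g.map (algebraMap K L)).Monic :=
        (Polynomial.monic_X_sub_C r).mul (hg.map _)
      have key : ∀ j, IsIntegral C
          ((f₁ * ((X - Polynomial.C r) * g.map (algebraMap K L))).coeff j) := by
        intro j
        have heq : f₁ * ((X - Polynomial.C r) * g.map (algebraMap K L))
            = (f * g).map (algebraMap K L) := by
          rw [Polynomial.map_mul, ← hfac]; ring
        rw [heq, Polynomial.coeff_map]
        exact (h j).map (IsScalarTower.toAlgHom C K L)
      have hdeg₁ : f₁.natDegree ≤ d := by
        have h1 : ((X - Polynomial.C r) * f₁).natDegree = 1 + f₁.natDegree := by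
          rw [(Polynomial.monic_X_sub_C r).natDegree_mul hf₁monic,
            Polynomial.natDegree_X_sub_C]
        have h2 : (f.map (algebraMap K L)).natDegree = f.natDegree :=
          hf.natDegree_map _
        rw [hfac, h2] at h1
        omega
      have hint₁ := ih (K := L) f₁ ((X - Polynomial.C r) * g.map (algebraMap K L))
        hdeg₁ hf₁monic hg' key
      -- coefficients of f.map are integral
      have hfLcoeff : IsIntegral C ((f.map (algebraMap K L)).coeff i) := by
        rw [← hfac]
        have hexp : ((X - Polynomial.C r) * f₁).coeff i
            = (X * f₁).coeff i - r * f₁.coeff i := by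
          rw [sub_mul, Polynomial.coeff_sub, Polynomial.coeff_C_mul]
        rw [hexp]
        refine IsIntegral.sub ?_ (hrint.mul (hint₁ i))
        rcases i with _ | i
        · have : (X * f₁).coeff 0 = 0 := by simp
          rw [this]; exact isIntegral_zero
        · rw [Polynomial.coeff_X_mul]
          exact hint₁ i
      rw [Polynomial.coeff_map] at hfLcoeff
      exact IsIntegral.tower_bot hinj hfLcoeff

/-- (Zariski–Samuel) If a matrix `a` over a commutative `C`-algebra `K` is
integral over `C`, then every coefficient of its characteristic polynomial is
integral over `C`. -/
theorem stmt2 {C K : Type*} [CommRing C] [CommRing K] [Algebra C K]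
    {n : ℕ} (a : Matrix (Fin n) (Fin n) K) (ha : IsIntegral C a) :
    ∀ i : ℕ, IsIntegral C (a.charpoly.coeff i) := by
  classical
  obtain ⟨p, hpm, hpa⟩ := ha
  set q : K[X] := p.map (algebraMap C K) with hq
  have hqm : q.Monic := hpm.map _
  have hqa : Polynomial.eval₂ (algebraMap K (Matrix (Fin n) (Fin n) K)) a q = 0 := by
    rw [hq, Polynomial.eval₂_map, ← IsScalarTower.algebraMap_eq]
    exact hpa
  -- divisibility: charpoly a ∣ q ^ n
  set b : Matrix (Fin n) (Fin n) K[X] := a.map (Polynomial.C : K → K[X]) with hb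
  have hcomm : ∀ r : K[X], Commute ((Matrix.scalar (Fin n)) r) b :=
    fun r => (Matrix.scalar_commute r (fun r' => Commute.all r r') b)
  set Φ : (K[X])[X] →+* Matrix (Fin n) (Fin n) K[X] :=
    Polynomial.eval₂RingHom' (Matrix.scalar (Fin n)) b hcomm with hΦ
  set p' : (K[X])[X] := q.map (Polynomial.C : K →+* K[X]) with hp'
  have hevalp' : p'.eval (Polynomial.X : K[X]) = q := by
    rw [hp', Polynomial.eval_map, Polynomial.eval₂_C_X]
  have hdvd : (X - Polynomial.C (Polynomial.X : K[X])) ∣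
      (p' - Polynomial.C (p'.eval (Polynomial.X : K[X]))) :=
    Polynomial.X_sub_C_dvd_sub_C_eval
  have hΦ1 : Φ (X : (K[X])[X]) = b := by
    simp [hΦ, Polynomial.eval₂RingHom']
  have hΦ2 : Φ (Polynomial.C (Polynomial.X : K[X])) = Matrix.scalar (Fin n) Polynomial.X := by
    simp [hΦ, Polynomial.eval₂RingHom']
  have hΦp' : Φ p' = 0 := by
    have h1 : Φ p' = Polynomial.eval₂
        (((Matrix.scalar (Fin n)) : K[X] →+* Matrix (Fin n) (Fin n) K[X]).comp
          (Polynomial.C : K →+* K[X])) b q := by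
      simp [hΦ, hp', Polynomial.eval₂RingHom', Polynomial.eval₂_map]
    have h2 : (((Matrix.scalar (Fin n)) : K[X] →+* Matrix (Fin n) (Fin n) K[X]).comp
          (Polynomial.C : K →+* K[X]))
        = ((Polynomial.C : K →+* K[X]).mapMatrix).comp
          (algebraMap K (Matrix (Fin n) (Fin n) K)) := by
      refine RingHom.ext fun x => ?_
      ext i j
      simp only [RingHom.comp_apply, Matrix.scalar_apply, RingHom.mapMatrix_apply,
        Matrix.algebraMap_eq_diagonal, Matrix.map_apply, Matrix.diagonal_apply]
      split_ifs <;> simp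
    have h3 : b = ((Polynomial.C : K →+* K[X]).mapMatrix) a := rfl
    rw [h1, h2, h3, ← Polynomial.hom_eval₂, hqa, map_zero]
  have hΦC : Φ (Polynomial.C (p'.eval (Polynomial.X : K[X])))
      = Matrix.scalar (Fin n) q := by
    simp [hΦ, Polynomial.eval₂RingHom', hevalp']
  have hdvd2 : (b - Matrix.scalar (Fin n) Polynomial.X) ∣
      (0 - Matrix.scalar (Fin n) q) := by
    have h5 := map_dvd Φ hdvd
    rw [map_sub, map_sub, hΦ1, hΦ2, hΦp', hΦC] at h5
    exact h5
  obtain ⟨c, hc⟩ := hdvd2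
  have hscalar : Matrix.scalar (Fin n) q = a.charmatrix * c := by
    have h4 : a.charmatrix = Matrix.scalar (Fin n) Polynomial.X - b := rfl
    rw [zero_sub] at hc
    rw [h4, ← neg_sub b, neg_mul, ← hc, neg_neg]
  have hdet : q ^ n = a.charpoly * c.det := by
    have := congrArg Matrix.det hscalar
    rwa [Matrix.det_mul, Matrix.scalar_apply, Matrix.det_diagonal, Finset.prod_const,
      Finset.card_univ, Fintype.card_fin] at this
  -- monic complement
  have hchm : a.charpoly.Monic := a.charpoly_monic
  have hgm : c.det.Monic := hchm.of_mul_monic_left (by rw [← hdet]; exact hqm.pow n)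
  -- coefficients of q ^ n are integral over C
  have hqn : ∀ j, IsIntegral C ((a.charpoly * c.det).coeff j) := by
    intro j
    rw [← hdet]
    have hpow : q ^ n = (p ^ n).map (algebraMap C K) := by
      rw [hq, Polynomial.map_pow]
    rw [hpow, Polynomial.coeff_map]
    exact isIntegral_algebraMap
  exact aux_kron a.charpoly.natDegree a.charpoly c.det le_rfl hchm hgm hqn
end

section
/- Let a ∈ M_n(F), and let C_a ⊆ F be the F-subalgebra generated by the coefficients of the characteristic polynomial of the left-multiplication operator ã on M_n(F). Then every coefficient of the characteristic polynomial of a is integral over C_a. -/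
/-!
In the basis of matrix units, left multiplication by `a` is block diagonal with `n` copies of `a`,
so `χ_ã = χ_a ^ n`. Thus `χ_a` is a monic divisor of a monic polynomial with coefficients in `C_a`;
its roots are roots of `χ_ã`, hence integral over `C_a`, and so are its coefficients.
-/

open Polynomial

namespace Polynomial

theorem isIntegral_coeff_of_dvd_of_coeff_mem {K : Type*} [CommRing K] (S : Subring K)
    {p q : K[X]} (hp : p.Monic) (hq : q.Monic) (hpS : ∀ n, p.coeff n ∈ S) (hqp : q ∣ p)
    (i : ℕ) : IsIntegral S (q.coeff i) := by
  have hcoeffs : (p.coeffs : Set K) ⊆ S := fun c hc => by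
    obtain ⟨n, -, rfl⟩ := mem_coeffs_iff.mp hc
    exact hpS n
  refine isIntegral_coeff_of_dvd (p.toSubring S hcoeffs) q
    ((monic_toSubring p S hcoeffs).mpr hp) hq ?_ i
  rwa [← map_toSubring p S hcoeffs] at hqp

end Polynomial

namespace Matrix

variable {R : Type*} [CommRing R] {m o : Type*} [Fintype m] [DecidableEq m]
  [Fintype o] [DecidableEq o]

theorem charmatrix_blockDiagonal (M : o → Matrix m m R) :
    charmatrix (blockDiagonal M) = blockDiagonal fun k => charmatrix (M k) := by
  ext ⟨i, k⟩ ⟨j, l⟩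
  simp only [charmatrix_apply, blockDiagonal_apply, diagonal_apply, Prod.ext_iff]
  split_ifs <;> simp_all

theorem charpoly_blockDiagonal (M : o → Matrix m m R) :
    (blockDiagonal M).charpoly = ∏ k, (M k).charpoly := by
  rw [charpoly, charmatrix_blockDiagonal, det_blockDiagonal]
  rfl

theorem toMatrix_stdBasis_mulLeft (a : Matrix m m R) :
    LinearMap.toMatrix (stdBasis R m m) (stdBasis R m m) (LinearMap.mulLeft R a) =
      blockDiagonal fun _ : m => a := by
  ext ⟨i, j⟩ ⟨k, l⟩
  rw [LinearMap.toMatrix_apply, stdBasis_eq_single, LinearMap.mulLeft_apply,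
    blockDiagonal_apply]
  change (a * single k l (1 : R)) i j = _
  simp [mul_apply, Matrix.single, ite_and, eq_comm]

theorem charpoly_mulLeft (a : Matrix m m R) :
    (LinearMap.mulLeft R a).charpoly = a.charpoly ^ Fintype.card m := by
  rw [← LinearMap.charpoly_toMatrix _ (stdBasis R m m), toMatrix_stdBasis_mulLeft,
    charpoly_blockDiagonal, Finset.prod_const, Finset.card_univ]

theorem charpoly_dvd_charpoly_mulLeft (a : Matrix m m R) :
    a.charpoly ∣ (LinearMap.mulLeft R a).charpoly := by
  rw [charpoly_mulLeft]
  cases isEmpty_or_nonempty m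
  · simp [charpoly_isEmpty]
  · exact dvd_pow_self _ Fintype.card_ne_zero

end Matrix

/-- Every coefficient of the characteristic polynomial of `a ∈ M_n(F)` is
integral over the subring `C_a` of `F` generated by the coefficients of the
characteristic polynomial of the left-multiplication operator `ã` on `M_n(F)`. -/
theorem stmt4 {F : Type*} [Field F] {n : ℕ} (a : Matrix (Fin n) (Fin n) F)
    (Ca : Subring F)
    (hCa : Ca = Subring.closure
      (Set.range fun i : ℕ => ((LinearMap.mulLeft F a).charpoly).coeff i)) :
    ∀ i : ℕ, IsIntegral Ca (a.charpoly.coeff i) :=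
  isIntegral_coeff_of_dvd_of_coeff_mem Ca (LinearMap.charpoly_monic _) a.charpoly_monic
    (fun j => hCa ▸ Subring.subset_closure ⟨j, rfl⟩) a.charpoly_dvd_charpoly_mulLeft
end

section
/- Let F : V^n → U be an alternating multilinear map on an n-dimensional vector space V over a field K, let a ∈ End(V), and for v₁, …, v_n ∈ V and S ⊆ {1,…,n} let wᵢ^S = a(vᵢ) for i ∈ S and wᵢ^S = vᵢ otherwise. Then Σ_{k=0}^{n} (−1)^k Σ_{S ⊆ {1,…,n}, |S|=k} F(w₁^S, …, w_n^S) = det(id − a)·F(v₁, …, v_n), which equals χ_a(1)·F(v₁,…,v_n) up to sign, where χ_a is the characteristic polynomial of a. -/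
open Finset

/-- Any alternating map in `finrank` many variables is determined by its value on a basis. -/
lemma aux_eq_det_smul {K V U : Type*} [Field K] [AddCommGroup V] [Module K V]
    [AddCommGroup U] [Module K U] {n : ℕ}
    (e : Module.Basis (Fin n) K V) (F : AlternatingMap K V U (Fin n)) (v : Fin n → V) :
    F v = e.det v • F e := by
  have h : F = (LinearMap.toSpanSingleton K U (F e)).compAlternatingMap e.det := by
    refine Module.Basis.ext_alternating e fun i h => ?_
    let σ : Equiv.Perm (Fin n) := Equiv.ofBijective i (Finite.injective_iff_bijective.1 h)
    change F (e ∘ σ) = _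
    have hc : (fun j => e (i j)) = ⇑e ∘ ⇑σ := rfl
    simp only [LinearMap.compAlternatingMap_apply, LinearMap.toSpanSingleton_apply, hc,
      AlternatingMap.map_perm, Module.Basis.det_self, smul_assoc, one_smul, smul_eq_mul, mul_one]
  conv_lhs => rw [h]
  simp [LinearMap.toSpanSingleton_apply, Module.Basis.det_self]

lemma aux_comp_det_smul {K V U : Type*} [Field K] [AddCommGroup V] [Module K V]
    [AddCommGroup U] [Module K U] {n : ℕ}
    (e : Module.Basis (Fin n) K V) (F : AlternatingMap K V U (Fin n)) (g : V →ₗ[K] V)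
    (v : Fin n → V) : F (fun i => g (v i)) = (LinearMap.det g) • F v := by
  rw [aux_eq_det_smul e F (fun i => g (v i)), aux_eq_det_smul e F v]
  rw [show (fun i => g (v i)) = g ∘ v from rfl, Module.Basis.det_comp, mul_smul]

lemma aux_charpoly_eval_one {K V : Type*} [Field K] [AddCommGroup V] [Module K V]
    [FiniteDimensional K V] (a : V →ₗ[K] V) :
    (LinearMap.charpoly a).eval 1 = LinearMap.det (1 - a) := by
  classical
  let b := Module.finBasis K V
  rw [← LinearMap.charpoly_toMatrix a b, Matrix.charpoly,
    show Polynomial.eval (1:K) = Polynomial.evalRingHom (1:K) from rfl, RingHom.map_det,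
    RingHom.mapMatrix_apply]
  have : ((LinearMap.toMatrix b b a).charmatrix).map (Polynomial.evalRingHom (1:K))
      = (1 : Matrix _ _ K) - LinearMap.toMatrix b b a := by
    ext i j
    by_cases h : i = j
    · subst h; simp [Matrix.charmatrix_apply_eq, Matrix.one_apply, Matrix.sub_apply]
    · simp [Matrix.charmatrix_apply_ne _ _ _ h, Matrix.one_apply, Matrix.sub_apply, h]
  rw [this, ← LinearMap.det_toMatrix b (1 - a), map_sub, LinearMap.toMatrix_one]

/-- Polarized Cayley–Hamilton/determinant expansion: for an alternating
multilinear map `F : V^n → U` on an `n`-dimensional space `V` and `a ∈ End(V)`,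
`Σ_{S ⊆ {1,…,n}} (−1)^{|S|} F(w^S) = det(1 − a) • F(v) = χ_a(1) • F(v)`, where
`wᵢ^S = a(vᵢ)` for `i ∈ S` and `wᵢ^S = vᵢ` otherwise. -/
theorem stmt15 {K V U : Type*} [Field K] [AddCommGroup V] [Module K V]
    [AddCommGroup U] [Module K U] [FiniteDimensional K V]
    {n : ℕ} (hdim : Module.finrank K V = n)
    (F : AlternatingMap K V U (Fin n)) (a : V →ₗ[K] V) (v : Fin n → V) :
    ∑ S : Finset (Fin n),
        ((-1 : K) ^ S.card) • F (fun i => if i ∈ S then a (v i) else v i) =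
      ((LinearMap.charpoly a).eval 1) • F v := by
  classical
  let e : Module.Basis (Fin n) K V := Module.finBasisOfFinrankEq K V hdim
  have key : F (fun i => (1 - a) (v i)) = ((LinearMap.charpoly a).eval 1) • F v := by
    rw [aux_comp_det_smul e F (1 - a) v, aux_charpoly_eval_one]
  rw [← key]
  have expand : F (fun i => (1 - a) (v i))
      = F ((fun i => -(a (v i))) + v) := by
    congr 1
    funext i
    simp [sub_smul, sub_eq_add_neg, add_comm]
  rw [expand]
  have hexp := MultilinearMap.map_add_univ F.toMultilinearMap (fun i => -(a (v i))) v
  erw [hexp]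
  refine Finset.sum_congr rfl fun S _ => ?_
  have hpc : S.piecewise (fun i => -(a (v i))) v
      = S.piecewise (fun i => (-1 : K) • (if i ∈ S then a (v i) else v i))
          (fun i => if i ∈ S then a (v i) else v i) := by
    funext i
    by_cases h : i ∈ S <;> simp [Finset.piecewise, h]
  have := F.toMultilinearMap.map_piecewise_smul (fun _ => (-1 : K))
      (fun i => if i ∈ S then a (v i) else v i) S
  rw [hpc]
  erw [this]
  simp
end
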